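/- Let h(x,y,z) = (s·x, s·y, (z + √2)/2) with s = √((z² + 2√2·z − 2)/(4z² − 4)), let g(U,W) = u₁w₁ + u₂w₂ − u₃w₃ be the Minkowski form on ℝ³, and let p = (x, y, √2) with x² + y² = 1. Then for every t ∈ ℝ the vector V = (−t·y, t·x, 0) is tangent to H²(1) at p and the Fréchet derivative D_p h satisfies g(D_p h(V), D_p h(V)) = g(V,V); i.e., the derivative of h preserves the (Riemannian) metric on the directions tangent to the circle C = {(x,y,√2) : x² + y² = 1}. -/

import Mathlib

open Filter Topology

noncomputable section

def g3 (U V : ℝ × ℝ × ℝ) : ℝ := U.1 * V.1 + U.2.1 * V.2.1 - U.2.2 * V.2.2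

def sFac (z : ℝ) : ℝ :=
  Real.sqrt ((z ^ 2 + 2 * Real.sqrt 2 * z - 2) / (4 * z ^ 2 - 4))

def h3 (p : ℝ × ℝ × ℝ) : ℝ × ℝ × ℝ :=
  (sFac p.2.2 * p.1, sFac p.2.2 * p.2.1, (p.2.2 + Real.sqrt 2) / 2)

/-- Example 4.1: along the directions tangent to the circle `C`, the derivative of
`h3` preserves the Minkowski (here Riemannian) metric. -/
theorem fderiv_h3_isometric_on_circle_directions (x y t : ℝ)
    (hp : x ^ 2 + y ^ 2 = 1) :
    x * (-t * y) + y * (t * x) - Real.sqrt 2 * 0 = 0 ∧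
    g3 (fderiv ℝ h3 (x, y, Real.sqrt 2) (-t * y, t * x, 0))
        (fderiv ℝ h3 (x, y, Real.sqrt 2) (-t * y, t * x, 0)) =
      g3 (-t * y, t * x, 0) (-t * y, t * x, 0) := by
  have hz2 : Real.sqrt 2 ^ 2 = 2 := Real.sq_sqrt (by norm_num)
  set z := Real.sqrt 2 with hzdef
  refine ⟨by ring, ?_⟩
  -- the inner function of sFac
  set f : ℝ → ℝ := fun w => (w ^ 2 + 2 * Real.sqrt 2 * w - 2) / (4 * w ^ 2 - 4) with hfdef
  have hfz : f z = 1 := by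
    simp only [hfdef]
    rw [show 2 * Real.sqrt 2 * z = 4 by rw [hzdef]; rw [mul_assoc, Real.mul_self_sqrt (by norm_num)]; ring]
    rw [hz2]; norm_num
  have hden : 4 * z ^ 2 - 4 ≠ 0 := by rw [hz2]; norm_num
  have hnum : HasDerivAt (fun w : ℝ => w ^ 2 + 2 * Real.sqrt 2 * w - 2)
      (2 * z + 2 * Real.sqrt 2) z := by
    have := ((hasDerivAt_pow 2 z).add ((hasDerivAt_id z).const_mul (2 * Real.sqrt 2))).sub_const 2
    simpa using this.congr_deriv (by ring)
  have hdenD : HasDerivAt (fun w : ℝ => 4 * w ^ 2 - 4) (8 * z) z := by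
    have := ((hasDerivAt_pow 2 z).const_mul 4).sub_const 4
    simpa using this.congr_deriv (by ring)
  have hf : HasDerivAt f (((2 * z + 2 * Real.sqrt 2) * (4 * z ^ 2 - 4)
      - (z ^ 2 + 2 * Real.sqrt 2 * z - 2) * (8 * z)) / (4 * z ^ 2 - 4) ^ 2) z :=
    hnum.div hdenD hden
  have hs : HasDerivAt sFac ((1 / (2 * Real.sqrt (f z))) * (((2 * z + 2 * Real.sqrt 2) * (4 * z ^ 2 - 4)
      - (z ^ 2 + 2 * Real.sqrt 2 * z - 2) * (8 * z)) / (4 * z ^ 2 - 4) ^ 2)) z := by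
    have hsq := Real.hasDerivAt_sqrt (x := f z) (by rw [hfz]; norm_num)
    exact hsq.comp z hf
  set c : ℝ := (1 / (2 * Real.sqrt (f z))) * (((2 * z + 2 * Real.sqrt 2) * (4 * z ^ 2 - 4)
      - (z ^ 2 + 2 * Real.sqrt 2 * z - 2) * (8 * z)) / (4 * z ^ 2 - 4) ^ 2) with hcdef
  have hsf1 : sFac z = 1 := by rw [show sFac z = Real.sqrt (f z) from rfl, hfz, Real.sqrt_one]
  -- fderiv pieces at p = (x,y,z)
  set p : ℝ × ℝ × ℝ := (x, y, z) with hpdef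
  have hZ : HasFDerivAt (fun q : ℝ × ℝ × ℝ => q.2.2)
      ((ContinuousLinearMap.snd ℝ ℝ ℝ).comp (ContinuousLinearMap.snd ℝ ℝ (ℝ × ℝ))) p :=
    (hasFDerivAt_snd).comp p hasFDerivAt_snd
  have hA : HasFDerivAt (fun q : ℝ × ℝ × ℝ => sFac q.2.2)
      (c • ((ContinuousLinearMap.snd ℝ ℝ ℝ).comp (ContinuousLinearMap.snd ℝ ℝ (ℝ × ℝ)))) p :=
    by have := hs.comp_hasFDerivAt p hZ; exact this
  have hX : HasFDerivAt (fun q : ℝ × ℝ × ℝ => q.1) (ContinuousLinearMap.fst ℝ ℝ (ℝ × ℝ)) p :=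
    hasFDerivAt_fst
  have hY : HasFDerivAt (fun q : ℝ × ℝ × ℝ => q.2.1)
      ((ContinuousLinearMap.fst ℝ ℝ ℝ).comp (ContinuousLinearMap.snd ℝ ℝ (ℝ × ℝ))) p :=
    (hasFDerivAt_fst).comp p hasFDerivAt_snd
  have h1 := hA.mul' hX
  have h2 := hA.mul' hY
  have h3' : HasFDerivAt (fun q : ℝ × ℝ × ℝ => (q.2.2 + Real.sqrt 2) / 2)
      ((2:ℝ)⁻¹ • ((ContinuousLinearMap.snd ℝ ℝ ℝ).comp (ContinuousLinearMap.snd ℝ ℝ (ℝ × ℝ)))) p := by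
    have key : (fun q : ℝ × ℝ × ℝ => (q.2.2 + Real.sqrt 2) / 2) = (2:ℝ)⁻¹ • fun q : ℝ × ℝ × ℝ => q.2.2 + Real.sqrt 2 := by
      funext q
      simp [div_eq_inv_mul, smul_eq_mul]
    rw [key]
    exact (hZ.add_const (Real.sqrt 2)).const_smul ((2:ℝ)⁻¹)
  have hh : HasFDerivAt h3 _ p := HasFDerivAt.prodMk h1 (HasFDerivAt.prodMk h2 h3')
  rw [hh.fderiv]
  simp [g3, hsf1, hpdef]
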